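/- Let (A,B,C,E) be the CCF of a minimal encoder G of an (n,k,δ) convolutional code C, and let (Â,B̂,Ĉ,Ê) be the CCF of a minimal encoder Ĝ of the dual code Ĉ, which has r̂ positive Forney indices. Then rank(C Ê^T B̂) = r̂. -/

import Mathlib

open Polynomial Matrix
open scoped Classical

noncomputable section

namespace ConvCode

variable (F : Type) [Field F] [Fintype F]

/-- Hamming weight of a vector. -/
def wt {n : ℕ} (a : Fin n → F) : ℕ := (Finset.univ.filter fun j => a j ≠ 0).card

/-- Weight enumerator of a set of vectors in `F^n`, as a polynomial in `ℂ[W]`. -/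
def weSet {n : ℕ} (S : Set (Fin n → F)) : Polynomial ℂ :=
  ∑ a ∈ (Set.toFinite S).toFinset, (Polynomial.X : Polynomial ℂ) ^ wt F a

/-- The `i`-th row degree of a polynomial matrix. -/
def rowDeg {k n : ℕ} (G : Matrix (Fin k) (Fin n) (Polynomial F)) (i : Fin k) : ℕ :=
  Finset.univ.sup fun j => (G i j).natDegree

/-- `G` is basic: it has a polynomial right inverse. -/
def IsBasic {k n : ℕ} (G : Matrix (Fin k) (Fin n) (Polynomial F)) : Prop :=
  ∃ H : Matrix (Fin n) (Fin k) (Polynomial F), G * H = 1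

/-- The degree of the code: maximal degree of the `k × k` minors of `G`. -/
def codeDeg {k n : ℕ} (G : Matrix (Fin k) (Fin n) (Polynomial F)) : ℕ :=
  Finset.univ.sup fun f : Fin k ↪ Fin n => ((G.submatrix id f).det).natDegree

/-- A minimal (basic) encoder: the sum of the row degrees equals the degree of the code. -/
def IsMinimalEncoder {k n : ℕ} (G : Matrix (Fin k) (Fin n) (Polynomial F)) : Prop :=
  IsBasic F G ∧ ∑ i, rowDeg F G i = codeDeg F G

/-- The convolutional code generated by the encoder `G`. -/
def code {k n : ℕ} (G : Matrix (Fin k) (Fin n) (Polynomial F)) : Set (Fin n → Polynomial F) :=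
  Set.range fun u : Fin k → Polynomial F => u ᵥ* G

/-- The (module-theoretic) dual of a convolutional code. -/
def dualCode {n : ℕ} (𝓒 : Set (Fin n → Polynomial F)) : Set (Fin n → Polynomial F) :=
  {w | ∀ v ∈ 𝓒, w ⬝ᵥ v = 0}

/-- The sequence-space pairing `⟨⟨v,w⟩⟩ = ∑_t v_t w_tᵀ`. -/
def seqPair {n : ℕ} (v w : Fin n → Polynomial F) : F :=
  ∑ j, ∑ t ∈ Finset.range ((v j).natDegree + 1), (v j).coeff t * (w j).coeff t

/-- The sequence space dual of a convolutional code. -/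
def seqDual {n : ℕ} (𝓒 : Set (Fin n → Polynomial F)) : Set (Fin n → Polynomial F) :=
  {w | ∀ v ∈ 𝓒, ∀ l : ℕ, seqPair F v (fun j => Polynomial.X ^ l * w j) = 0}

/-- Index set of the state space of the controller canonical form:
a state index is a pair `(i, ν)` with `i` a row index and `ν < δ_i`. -/
abbrev StateIdx (k : ℕ) (d : Fin k → ℕ) : Type := (i : Fin k) × Fin (d i)

/-- The state-transition matrix `A` of the controller canonical form. -/
def ccfA {k : ℕ} (d : Fin k → ℕ) : Matrix (StateIdx k d) (StateIdx k d) F :=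
  Matrix.of fun s t => if s.1 = t.1 ∧ (s.2 : ℕ) + 1 = (t.2 : ℕ) then 1 else 0

/-- The input-to-state matrix `B` of the controller canonical form. -/
def ccfB {k : ℕ} (d : Fin k → ℕ) : Matrix (Fin k) (StateIdx k d) F :=
  Matrix.of fun i t => if t.1 = i ∧ (t.2 : ℕ) = 0 then 1 else 0

/-- The state-to-output matrix `C` of the controller canonical form. -/
def ccfC {k n : ℕ} (d : Fin k → ℕ) (G : Matrix (Fin k) (Fin n) (Polynomial F)) :
    Matrix (StateIdx k d) (Fin n) F :=
  Matrix.of fun s j => (G s.1 j).coeff ((s.2 : ℕ) + 1)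

/-- The matrix `E = G(0)` of the controller canonical form. -/
def ccfE {k n : ℕ} (G : Matrix (Fin k) (Fin n) (Polynomial F)) : Matrix (Fin k) (Fin n) F :=
  Matrix.of fun i j => (G i j).coeff 0

/-- The state index set of the controller canonical form of `G`. -/
abbrev States {k n : ℕ} (G : Matrix (Fin k) (Fin n) (Polynomial F)) : Type :=
  StateIdx k (rowDeg F G)

def matA {k n : ℕ} (G : Matrix (Fin k) (Fin n) (Polynomial F)) :
    Matrix (States F G) (States F G) F := ccfA F (rowDeg F G)

def matB {k n : ℕ} (G : Matrix (Fin k) (Fin n) (Polynomial F)) :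
    Matrix (Fin k) (States F G) F := ccfB F (rowDeg F G)

def matC {k n : ℕ} (G : Matrix (Fin k) (Fin n) (Polynomial F)) :
    Matrix (States F G) (Fin n) F := ccfC F (rowDeg F G) G

def matE {k n : ℕ} (G : Matrix (Fin k) (Fin n) (Polynomial F)) :
    Matrix (Fin k) (Fin n) F := ccfE F G

/-- The weight adjacency matrix of a state space realization `(A,B,C,E)`. -/
def WAM {σ : Type} [Fintype σ] {k n : ℕ} (A : Matrix σ σ F) (B : Matrix (Fin k) σ F)
    (C : Matrix σ (Fin n) F) (E : Matrix (Fin k) (Fin n) F) :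
    Matrix (σ → F) (σ → F) (Polynomial ℂ) :=
  Matrix.of fun X Y =>
    weSet F {v | ∃ u : Fin k → F, Y = X ᵥ* A + u ᵥ* B ∧ v = X ᵥ* C + u ᵥ* E}

/-- The weight adjacency matrix of an encoder `G` (via its controller canonical form). -/
def wam {k n : ℕ} (G : Matrix (Fin k) (Fin n) (Polynomial F)) :
    Matrix (States F G → F) (States F G → F) (Polynomial ℂ) :=
  WAM F (matA F G) (matB F G) (matC F G) (matE F G)

/-- The block code `C_const = 𝓒 ∩ F^n` of constant codewords. -/
def constSet {k n : ℕ} (G : Matrix (Fin k) (Fin n) (Polynomial F)) : Set (Fin n → F) :=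
  {w | (fun j => Polynomial.C (w j)) ∈ code F G}

/-- The block code `C_coeff` of coefficient vectors of codewords. -/
def coeffSet {k n : ℕ} (G : Matrix (Fin k) (Fin n) (Polynomial F)) : Set (Fin n → F) :=
  {w | ∃ v ∈ code F G, ∃ t : ℕ, ∀ j, (v j).coeff t = w j}

/-- The dual of a block code. -/
def blockDual {n : ℕ} (S : Set (Fin n → F)) : Set (Fin n → F) :=
  {w | ∀ v ∈ S, w ⬝ᵥ v = 0}

/-- `Δ`: the set of state pairs `(X,Y)` admitting a transition `Y = XA + uB`. -/
def Delta {k n : ℕ} (G : Matrix (Fin k) (Fin n) (Polynomial F)) :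
    Set ((States F G → F) × (States F G → F)) :=
  {p | ∃ u : Fin k → F, p.2 = p.1 ᵥ* matA F G + u ᵥ* matB F G}

/-- `Δ⁻ = {(0,Y) : Y ∈ im A}`. -/
def DeltaMinus {k n : ℕ} (G : Matrix (Fin k) (Fin n) (Polynomial F)) :
    Set ((States F G → F) × (States F G → F)) :=
  {p | p.1 = 0 ∧ ∃ X : States F G → F, p.2 = X ᵥ* matA F G}

/-- `Ω = {(X,Y) ∈ Δ : XC + Y Bᵀ E ∈ C_const}`. -/
def Omega {k n : ℕ} (G : Matrix (Fin k) (Fin n) (Polynomial F)) :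
    Set ((States F G → F) × (States F G → F)) :=
  {p | p ∈ Delta F G ∧
    p.1 ᵥ* matC F G + (p.2 ᵥ* (matB F G)ᵀ) ᵥ* matE F G ∈ constSet F G}

/-- Orthogonal of a set of state pairs with respect to the standard bilinear form on `F^{2δ}`. -/
def pairPerp {σ : Type} [Fintype σ] (S : Set ((σ → F) × (σ → F))) :
    Set ((σ → F) × (σ → F)) :=
  {p | ∀ s ∈ S, p.1 ⬝ᵥ s.1 + p.2 ⬝ᵥ s.2 = 0}

/-- `S_0 = Bᵀ E` and `S_i = Bᵀ B A^{i-1} C` for `i ≥ 1`. -/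
def Smat {k n : ℕ} (d : Fin k → ℕ) (G : Matrix (Fin k) (Fin n) (Polynomial F)) :
    ℕ → Matrix (StateIdx k d) (Fin n) F
  | 0 => (ccfB F d)ᵀ * ccfE F G
  | (i + 1) => (ccfB F d)ᵀ * ccfB F d * ccfA F d ^ i * ccfC F d G

def Sm {k n : ℕ} (G : Matrix (Fin k) (Fin n) (Polynomial F)) :
    ℕ → Matrix (States F G) (Fin n) F := Smat F (rowDeg F G) G

/-- The matrix `N = ∑_{m≥2} ∑_{i=1}^{m-1} ∑_{j=0}^{i-1} (Âᵀ)^{i-1} Ŝ_j S_{m-j}ᵀ A^{m-(i+1)}`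
(all summands with `m ≥ δ + δ̂` vanish, so the sum is truncated there). -/
def Nm {k kb n : ℕ} (G : Matrix (Fin k) (Fin n) (Polynomial F))
    (Gh : Matrix (Fin kb) (Fin n) (Polynomial F)) :
    Matrix (States F Gh) (States F G) F :=
  ∑ m ∈ Finset.Icc 2 (Fintype.card (States F G) + Fintype.card (States F Gh)),
    ∑ i ∈ Finset.Icc 1 (m - 1), ∑ j ∈ Finset.range i,
      (matA F Gh)ᵀ ^ (i - 1) * Sm F Gh j * (Sm F G (m - j))ᵀ * matA F G ^ (m - (i + 1))

/-- The reciprocal matrix `G' = diag(D^{δ_1},…,D^{δ_k}) · G(D⁻¹)`. -/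
def recip {k n : ℕ} (G : Matrix (Fin k) (Fin n) (Polynomial F)) :
    Matrix (Fin k) (Fin n) (Polynomial F) :=
  Matrix.of fun i j => (G i j).reflect (rowDeg F G i)

/-- The block diagonal matrix `R` whose blocks are the anti-identity matrices. -/
def Rmat {k : ℕ} (d : Fin k → ℕ) : Matrix (StateIdx k d) (StateIdx k d) F :=
  Matrix.of fun s t => if s.1 = t.1 ∧ (s.2 : ℕ) + (t.2 : ℕ) + 1 = d s.1 then 1 else 0

/-- The MacWilliams matrix `𝓗 = q^{-δ/2} (ζ^{τ(X Yᵀ)})_{X,Y}`. -/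
def macH (σ : Type) [Fintype σ] (p : ℕ) [Algebra (ZMod p) F] (ζ : ℂ) :
    Matrix (σ → F) (σ → F) ℂ :=
  Matrix.of fun X Y =>
    (((Real.sqrt (Fintype.card F) : ℝ) : ℂ))⁻¹ ^ Fintype.card σ *
      ζ ^ (Algebra.trace (ZMod p) F (X ⬝ᵥ Y)).val

/-- The MacWilliams transform `H(f)(W) = (1+(q-1)W)^n f((1-W)/(1+(q-1)W))`
on polynomials of degree at most `n`. -/
def macWT (q n : ℕ) (f : Polynomial ℂ) : Polynomial ℂ :=
  ∑ j ∈ Finset.range (n + 1),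
    Polynomial.C (f.coeff j) * (1 - Polynomial.X) ^ j *
      (1 + Polynomial.C ((q : ℂ) - 1) * Polynomial.X) ^ (n - j)

end ConvCode

/-! The dual code is generated by `Ĝ`, so `Ĝ Gᵀ = 0` and in particular `Ê Eᵀ = 0`. The matrix
`B̂` keeps exactly the columns of `C Êᵀ` indexed by the rows `i` with `δ̂_i > 0`, so it suffices to
show that these columns are independent. If `C wᵀ = 0` for `w = ∑_{δ̂_i > 0} c_i Ê_i`, then also
`E wᵀ = 0`, so all coefficients of `G wᵀ` vanish and the constant vector `w` lies in the dual code: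
`w = u Ĝ`. Since `Ĝ` is minimal it has the predictable degree property, which forces `u` to be
constant and supported on the rows with `δ̂_i = 0`. As `Ê` has full row rank (`Ĝ` is basic),
comparing the two expressions for `w` gives `c = 0`. -/

namespace Polynomial
variable {R : Type*} [CommSemiring R]

theorem coeff_prod_sum_of_natDegree_le {ι : Type*} (s : Finset ι) (p : ι → R[X]) (d : ι → ℕ)
    (h : ∀ i ∈ s, (p i).natDegree ≤ d i) :
    (∏ i ∈ s, p i).coeff (∑ i ∈ s, d i) = ∏ i ∈ s, (p i).coeff (d i) := by
  classical
  induction s using Finset.cons_induction with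
  | empty => simp
  | cons a s ha ih =>
    simp only [Finset.forall_mem_cons] at h
    rw [Finset.prod_cons, Finset.sum_cons, Finset.prod_cons, coeff_mul_add_eq_of_natDegree_le h.1
      ((natDegree_prod_le _ _).trans (Finset.sum_le_sum h.2)), ih h.2]

end Polynomial

namespace Matrix

section PolynomialMatrix
variable {R : Type*} [CommRing R] {n : Type*} [Fintype n] [DecidableEq n]

theorem natDegree_det_le_sum_of_natDegree_le (M : Matrix n n R[X]) (d : n → ℕ)
    (h : ∀ i j, (M i j).natDegree ≤ d i) : M.det.natDegree ≤ ∑ i, d i := by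
  rw [det_apply]
  refine natDegree_sum_le_of_forall_le _ _ fun σ _ => ?_
  rw [Units.smul_def, ← Equiv.sum_comp σ d]
  exact (natDegree_smul_le _ _).trans <|
    (natDegree_prod_le _ _).trans (Finset.sum_le_sum fun i _ => h (σ i) i)

theorem coeff_det_sum_of_natDegree_le (M : Matrix n n R[X]) (d : n → ℕ)
    (h : ∀ i j, (M i j).natDegree ≤ d i) :
    M.det.coeff (∑ i, d i) = (of fun i j => (M i j).coeff (d i)).det := by
  simp only [det_apply, finsetSum_coeff, Units.smul_def, coeff_smul]
  refine Finset.sum_congr rfl fun σ _ => ?_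
  rw [← Equiv.sum_comp σ d, coeff_prod_sum_of_natDegree_le _ _ _ fun i _ => h (σ i) i]
  rfl

end PolynomialMatrix

variable {R : Type*} {l m n : Type*}

theorem mul_eq_submatrix_mul_submatrix [Fintype m] [NonUnitalNonAssocSemiring R]
    {p : m → Prop} [DecidablePred p] (N : Matrix l m R) (B : Matrix m n R)
    (hB : ∀ i, ¬ p i → B i = 0) :
    N * B = (N.submatrix id Subtype.val : Matrix l {i // p i} R) *
      (B.submatrix Subtype.val id : Matrix {i // p i} n R) := by
  ext s t
  have hzero : ∑ i : {i // ¬ p i}, N s i * B i t = 0 :=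
    Finset.sum_eq_zero fun i _ => by simp [hB i.1 i.2]
  rw [mul_apply, ← Fintype.sum_subtype_add_sum_subtype p, hzero, add_zero]
  rfl

theorem vecMul_submatrix_val [Fintype m] [NonUnitalNonAssocSemiring R] {p : m → Prop}
    [DecidablePred p] (y : {i // p i} → R) (M : Matrix m n R) :
    y ᵥ* M.submatrix Subtype.val id = (fun i => if h : p i then y ⟨i, h⟩ else 0) ᵥ* M := by
  ext j
  have hzero : ∑ i : {i // ¬ p i}, (if h : p i then y ⟨i, h⟩ else 0) * M i j = 0 :=
    Finset.sum_eq_zero fun i _ => by rw [dif_neg i.2, zero_mul]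
  rw [vecMul, dotProduct, vecMul, dotProduct, ← Fintype.sum_subtype_add_sum_subtype p, hzero,
    add_zero]
  exact Finset.sum_congr rfl fun i _ => by rw [dif_pos i.2]; rfl

theorem rank_mul_eq_left_of_mul_eq_one [Fintype m] [Fintype n] [DecidableEq m] [CommRing R]
    [StrongRankCondition R] {B : Matrix m n R} {B' : Matrix n m R} (hB : B * B' = 1)
    (A : Matrix l m R) : (A * B).rank = A.rank :=
  (rank_mul_le_left A B).antisymm <| by
    simpa [Matrix.mul_assoc, hB] using rank_mul_le_left (A * B) B'

theorem rank_eq_card_of_mulVec_eq_zero [Fintype n] [CommRing R] [StrongRankCondition R]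
    {A : Matrix m n R} (hA : ∀ v, A *ᵥ v = 0 → v = 0) : A.rank = Fintype.card n := by
  rw [rank, LinearMap.finrank_range_of_inj ((injective_iff_map_eq_zero A.mulVecLin).2 hA),
    Module.finrank_fintype_fun_eq_card]

end Matrix

namespace ConvCode
variable {F : Type} [Field F] {k kb n : ℕ}

def leadRowCoeff (G : Matrix (Fin k) (Fin n) F[X]) : Matrix (Fin k) (Fin n) F :=
  of fun i j => (G i j).coeff (rowDeg F G i)

theorem natDegree_le_rowDeg (G : Matrix (Fin k) (Fin n) F[X]) (i : Fin k) (j : Fin n) :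
    (G i j).natDegree ≤ rowDeg F G i :=
  Finset.le_sup (f := fun j => (G i j).natDegree) (Finset.mem_univ j)

theorem ccfE_eq_map (G : Matrix (Fin k) (Fin n) F[X]) : ccfE F G = G.map constantCoeff := by
  ext i j
  simp [ccfE]

theorem IsBasic.vecMul_ccfE_injective {G : Matrix (Fin k) (Fin n) F[X]} (hG : IsBasic F G) :
    Function.Injective fun c : Fin k → F => c ᵥ* ccfE F G := by
  obtain ⟨H, hH⟩ := hG
  have hE : ccfE F G * H.map constantCoeff = 1 := by
    rw [ccfE_eq_map, ← Matrix.map_mul, hH, Matrix.map_one _ (map_zero _) (map_one _)]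
  intro c c' hcc'
  simpa [vecMul_vecMul, hE] using congrArg (· ᵥ* H.map constantCoeff) hcc'

theorem IsMinimalEncoder.eq_zero_of_vecMul_leadRowCoeff_eq_zero
    {G : Matrix (Fin k) (Fin n) F[X]} (hG : IsMinimalEncoder F G) {c : Fin k → F}
    (hc : c ᵥ* leadRowCoeff G = 0) : c = 0 := by
  by_cases hδ : ∑ i, rowDeg F G i = 0
  · have hlead : leadRowCoeff G = ccfE F G := by
      ext i j
      simp [leadRowCoeff, ccfE, Finset.sum_eq_zero_iff.mp hδ i (Finset.mem_univ i)]
    exact hG.1.vecMul_ccfE_injective (by simpa [hlead] using hc)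
  by_contra hc0
  -- the coefficient of `D^{∑ δ_i}` in a `k × k` minor of `G` is the same minor of `leadRowCoeff G`
  suffices codeDeg F G < ∑ i, rowDeg F G i from this.ne hG.2.symm
  refine (Finset.sup_lt_iff (Nat.pos_of_ne_zero hδ)).2 fun f _ => ?_
  have hdeg : ∀ i j, (G.submatrix id f i j).natDegree ≤ rowDeg F G i :=
    fun i j => natDegree_le_rowDeg G i (f j)
  have hcoeff : (G.submatrix id f).det.coeff (∑ i, rowDeg F G i) = 0 := by
    rw [coeff_det_sum_of_natDegree_le _ _ hdeg]
    exact exists_vecMul_eq_zero_iff.mp ⟨c, hc0, funext fun j => congrFun hc (f j)⟩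
  refine (natDegree_det_le_sum_of_natDegree_le _ _ hdeg).lt_of_ne fun h => ?_
  rw [← h, coeff_natDegree, leadingCoeff_eq_zero] at hcoeff
  simp [hcoeff] at h
  exact hδ h.symm

/-- One inequality of the predictable degree property. -/
theorem IsMinimalEncoder.natDegree_add_rowDeg_le {G : Matrix (Fin k) (Fin n) F[X]}
    (hG : IsMinimalEncoder F G) {u : Fin k → F[X]} {d : ℕ}
    (hd : ∀ j, ((u ᵥ* G) j).natDegree ≤ d) {i : Fin k} (hi : u i ≠ 0) :
    (u i).natDegree + rowDeg F G i ≤ d := by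
  by_contra! hlt
  obtain ⟨i₀, hi₀, hmax⟩ := Finset.exists_max_image (Finset.univ.filter (u · ≠ 0))
    (fun i => (u i).natDegree + rowDeg F G i) ⟨i, by simpa using hi⟩
  simp only [Finset.mem_filter, Finset.mem_univ, true_and] at hi₀ hmax
  set D := (u i₀).natDegree + rowDeg F G i₀
  have hdD : d < D := hlt.trans_le (hmax i hi)
  set c : Fin k → F := fun i => (u i).coeff (D - rowDeg F G i)
  have hcoeff : ∀ i j, (u i * G i j).coeff D = c i * leadRowCoeff G i j := by
    intro i j
    by_cases hui : u i = 0
    · simp [c, hui]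
    have hle := hmax i hui
    have h := coeff_mul_add_eq_of_natDegree_le (f := u i) (df := D - rowDeg F G i)
      (by omega) (natDegree_le_rowDeg G i j)
    rwa [Nat.sub_add_cancel (by omega)] at h
  have hc : c ᵥ* leadRowCoeff G = 0 := funext fun j => by
    have hcoeffD := coeff_eq_zero_of_natDegree_lt ((hd j).trans_lt hdD)
    simpa [vecMul, dotProduct, ← hcoeff, ← finsetSum_coeff] using hcoeffD
  have hc₀ : c i₀ = (u i₀).leadingCoeff := by
    simp only [c, D, Nat.add_sub_cancel, leadingCoeff]
  exact hi₀ <| leadingCoeff_eq_zero.mp <|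
    hc₀ ▸ congrFun (hG.eq_zero_of_vecMul_leadRowCoeff_eq_zero hc) i₀

theorem ccfB_row_eq_zero {d : Fin k → ℕ} {i : Fin k} (hi : ¬ 0 < d i) : ccfB F d i = 0 := by
  ext ⟨i', ν⟩
  simp only [ccfB, of_apply, Pi.zero_apply, ite_eq_right_iff, and_imp]
  rintro rfl
  exact absurd ν.pos hi

theorem ccfB_submatrix_mul_transpose (d : Fin k → ℕ) :
    (ccfB F d).submatrix (Subtype.val : {i // 0 < d i} → Fin k) id *
      ((ccfB F d).submatrix (Subtype.val : {i // 0 < d i} → Fin k) id)ᵀ = 1 := by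
  ext p p'
  rw [mul_apply, Finset.sum_eq_single ⟨p.1, ⟨0, p.2⟩⟩]
  · simp [ccfB, one_apply, Subtype.ext_iff, eq_comm]
  · rintro ⟨i, ν⟩ _ hne
    rw [submatrix_apply, ccfB, of_apply, if_neg, zero_mul]
    rintro ⟨rfl, hν⟩
    exact hne (Sigma.ext rfl (heq_of_eq (Fin.ext hν)))
  · simp

theorem rank_mul_ccfB {m : Type*} [Fintype m] (N : Matrix m (Fin k) F) (d : Fin k → ℕ) :
    (N * ccfB F d).rank = (N.submatrix id (Subtype.val : {i // 0 < d i} → Fin k)).rank := by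
  rw [Matrix.mul_eq_submatrix_mul_submatrix N (ccfB F d) fun _ => ccfB_row_eq_zero,
    rank_mul_eq_left_of_mul_eq_one (ccfB_submatrix_mul_transpose d) (N.submatrix id _)]

theorem row_mem_code (G : Matrix (Fin k) (Fin n) F[X]) (i : Fin k) : G i ∈ code F G :=
  ⟨Pi.single i 1, single_one_vecMul i G⟩

theorem mem_dualCode_code_of_mulVec_eq_zero {G : Matrix (Fin k) (Fin n) F[X]}
    {v : Fin n → F[X]} (hv : G *ᵥ v = 0) : v ∈ dualCode F (code F G) := by
  rintro _ ⟨u, rfl⟩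
  rw [dotProduct_comm, ← dotProduct_mulVec, hv, dotProduct_zero]

theorem mul_transpose_eq_zero_of_code_eq_dualCode {G : Matrix (Fin k) (Fin n) F[X]}
    {Gh : Matrix (Fin kb) (Fin n) F[X]} (hdual : code F Gh = dualCode F (code F G)) :
    Gh * Gᵀ = 0 :=
  Matrix.ext fun a b => (hdual ▸ row_mem_code Gh a) _ (row_mem_code G b)

theorem mulVec_C_eq_zero (G : Matrix (Fin k) (Fin n) F[X]) {w : Fin n → F}
    (hE : ccfE F G *ᵥ w = 0) (hC : ccfC F (rowDeg F G) G *ᵥ w = 0) :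
    G *ᵥ (fun j => C (w j)) = 0 := by
  funext i
  ext t
  have hcoeff : ((G *ᵥ fun j => C (w j)) i).coeff t = ∑ j, (G i j).coeff t * w j := by
    simp [mulVec, dotProduct, finsetSum_coeff, coeff_mul_C]
  rw [hcoeff, Pi.zero_apply, coeff_zero]
  rcases t with _ | t
  · exact congrFun hE i
  by_cases ht : t < rowDeg F G i
  · exact congrFun hC ⟨i, ⟨t, ht⟩⟩
  refine Finset.sum_eq_zero fun j _ => ?_
  rw [coeff_eq_zero_of_natDegree_lt ((natDegree_le_rowDeg G i j).trans_lt (by omega)), zero_mul]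

theorem eq_zero_of_matC_mulVec_vecMul_matE_eq_zero {G : Matrix (Fin k) (Fin n) F[X]}
    {Gh : Matrix (Fin kb) (Fin n) F[X]} (hGh : IsMinimalEncoder F Gh)
    (hdual : code F Gh = dualCode F (code F G)) {y : {i // 0 < rowDeg F Gh i} → F}
    (hy : matC F G *ᵥ (y ᵥ* (matE F Gh).submatrix Subtype.val id) = 0) : y = 0 := by
  set b : Fin kb → F := fun i => if h : 0 < rowDeg F Gh i then y ⟨i, h⟩ else 0
  set w := b ᵥ* ccfE F Gh
  rw [matE, vecMul_submatrix_val] at hy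
  have hEE : ccfE F Gh * (ccfE F G)ᵀ = 0 := by
    rw [ccfE_eq_map, ccfE_eq_map, ← transpose_map, ← Matrix.map_mul,
      mul_transpose_eq_zero_of_code_eq_dualCode hdual, Matrix.map_zero _ (map_zero _)]
  have hEw : ccfE F G *ᵥ w = 0 := by
    rw [← vecMul_transpose, vecMul_vecMul, hEE, vecMul_zero]
  obtain ⟨u, hu⟩ : (fun j => C (w j)) ∈ code F Gh :=
    hdual ▸ mem_dualCode_code_of_mulVec_eq_zero (mulVec_C_eq_zero G hEw hy)
  have hu_pos : ∀ i, 0 < rowDeg F Gh i → u i = 0 := fun i hi => by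
    by_contra hui
    have := hGh.natDegree_add_rowDeg_le (d := 0) (fun j => by simp [hu]) hui
    omega
  have hw : (fun i => (u i).coeff 0) ᵥ* ccfE F Gh = w := by
    funext j
    simpa [hu, ccfE_eq_map, Function.comp_def] using
      (RingHom.map_vecMul constantCoeff Gh u j).symm
  have hbu : b = fun i => (u i).coeff 0 := hGh.1.vecMul_ccfE_injective hw.symm
  funext p
  simpa [b, hu_pos p.1 p.2, p.2] using congrFun hbu p.1

end ConvCode

theorem statement10_general {F : Type} [Field F]
    (k kb n : ℕ)
    (G : Matrix (Fin k) (Fin n) (Polynomial F))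
    (Gh : Matrix (Fin kb) (Fin n) (Polynomial F)) (hGh : ConvCode.IsMinimalEncoder F Gh)
    (hdual : ConvCode.code F Gh = ConvCode.dualCode F (ConvCode.code F G)) :
    (ConvCode.matC F G * (ConvCode.matE F Gh)ᵀ * ConvCode.matB F Gh).rank =
      (Finset.univ.filter fun i => 0 < ConvCode.rowDeg F Gh i).card := by
  rw [ConvCode.matB, ConvCode.rank_mul_ccfB, rank_eq_card_of_mulVec_eq_zero,
    Fintype.card_subtype]
  intro y hy
  refine ConvCode.eq_zero_of_matC_mulVec_vecMul_matE_eq_zero hGh hdual ?_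
  rwa [submatrix_mul _ _ _ id _ Function.bijective_id, submatrix_id_id, ← mulVec_mulVec,
    ← transpose_submatrix, mulVec_transpose] at hy

/-- Proposition 4.5(b): `rank (C Êᵀ B̂) = r̂`. -/
theorem statement10 {F : Type} [Field F] [Fintype F]
    (k kb n : ℕ) (hkn : k + kb = n)
    (G : Matrix (Fin k) (Fin n) (Polynomial F)) (hG : ConvCode.IsMinimalEncoder F G)
    (Gh : Matrix (Fin kb) (Fin n) (Polynomial F)) (hGh : ConvCode.IsMinimalEncoder F Gh)
    (hdual : ConvCode.code F Gh = ConvCode.dualCode F (ConvCode.code F G)) :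
    (ConvCode.matC F G * (ConvCode.matE F Gh)ᵀ * ConvCode.matB F Gh).rank =
      (Finset.univ.filter fun i => 0 < ConvCode.rowDeg F Gh i).card :=
  statement10_general k kb n G Gh hGh hdual
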